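/- arXiv:2603.07793 — 8 statements merged into one kernel-verified Lean document; each statement's English description precedes it below -/
import Mathlib

section
/- For all real θ₁, θ₂, with f_n(θ) = cos^n θ + cos^n(θ−2π/3) + cos^n(θ+2π/3), one has (f₆(θ₁) − f₆(θ₂))·(f₁₀(θ₁) − f₁₀(θ₂)) = (405/16384)·(cos(6θ₁) − cos(6θ₂))². -/
noncomputable def f (n : ℕ) (θ : ℝ) : ℝ :=
  Real.cos θ ^ n + Real.cos (θ - 2 * Real.pi / 3) ^ n + Real.cos (θ + 2 * Real.pi / 3) ^ n

lemma cos23 : Real.cos (2 * Real.pi / 3) = -(1/2) := by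
  rw [show 2 * Real.pi / 3 = Real.pi - Real.pi / 3 by ring, Real.cos_pi_sub,
    Real.cos_pi_div_three]

lemma sin23sq : Real.sin (2 * Real.pi / 3) ^ 2 = 3 / 4 := by
  rw [show 2 * Real.pi / 3 = Real.pi - Real.pi / 3 by ring, Real.sin_pi_sub,
    Real.sq_sin_pi_div_three]

lemma cos6 (θ : ℝ) : Real.cos (6 * θ) =
    2 * (4 * Real.cos θ ^ 3 - 3 * Real.cos θ) ^ 2 - 1 := by
  rw [show (6:ℝ) * θ = 2 * (3 * θ) by ring, Real.cos_two_mul, Real.cos_three_mul]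

lemma hab (θ : ℝ) :
    Real.cos (θ + 2 * Real.pi / 3) = -Real.cos (θ - 2 * Real.pi / 3) - Real.cos θ ∧
    Real.cos (θ - 2 * Real.pi / 3) * (-Real.cos (θ - 2 * Real.pi / 3) - Real.cos θ)
      = Real.cos θ ^ 2 - 3/4 := by
  have h1 := Real.cos_add θ (2 * Real.pi / 3)
  have h2 := Real.cos_sub θ (2 * Real.pi / 3)
  have h3 := Real.sin_sq_add_cos_sq θ
  have h4 := sin23sq
  rw [cos23] at h1 h2
  constructor
  · rw [h1, h2]; ring
  · rw [h2]; nlinarith [h4, h3]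

lemma f6_eq (θ : ℝ) : f 6 θ = 15/16 + 3/32 * Real.cos (6 * θ) := by
  obtain ⟨hb, h2⟩ := hab θ
  set a := Real.cos (θ - 2 * Real.pi / 3)
  set c := Real.cos θ
  rw [f, hb, cos6]
  linear_combination ((-9/8:ℝ) + (-15/4:ℝ)*c^2 + (1:ℝ)*c^4 + (-3/2:ℝ)*a*c + (-7:ℝ)*a*c^3
    + (-3/2:ℝ)*a^2 + (-9:ℝ)*a^2*c^2 + (-4:ℝ)*a^3*c + (-2:ℝ)*a^4) * h2

lemma f10_eq (θ : ℝ) : f 10 θ = 189/256 + 135/512 * Real.cos (6 * θ) := by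
  obtain ⟨hb, h2⟩ := hab θ
  set a := Real.cos (θ - 2 * Real.pi / 3)
  set c := Real.cos θ
  rw [f, hb, cos6]
  linear_combination ((-81/128:ℝ) + (-459/64:ℝ)*c^2 + (117/16:ℝ)*c^4 + (-3/2:ℝ)*c^6
    + (-2:ℝ)*c^8 + (-27/32:ℝ)*a*c + (-171/16:ℝ)*a*c^3 + (-9/2:ℝ)*a*c^5 + (-8:ℝ)*a*c^7
    + (-27/32:ℝ)*a^2 + (-189/16:ℝ)*a^2*c^2 + (-81/4:ℝ)*a^2*c^4 + (-35:ℝ)*a^2*c^6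
    + (-9/4:ℝ)*a^3*c + (-33:ℝ)*a^3*c^3 + (-77:ℝ)*a^3*c^5 + (-9/8:ℝ)*a^4
    + (-81/4:ℝ)*a^4*c^2 + (-98:ℝ)*a^4*c^4 + (-9/2:ℝ)*a^5*c + (-77:ℝ)*a^5*c^3
    + (-3/2:ℝ)*a^6 + (-35:ℝ)*a^6*c^2 + (-8:ℝ)*a^7*c + (-2:ℝ)*a^8) * h2

theorem f6_f10_prod (θ₁ θ₂ : ℝ) :
    (f 6 θ₁ - f 6 θ₂) * (f 10 θ₁ - f 10 θ₂) =
      405 / 16384 * (Real.cos (6 * θ₁) - Real.cos (6 * θ₂)) ^ 2 := by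
  rw [f6_eq, f6_eq, f10_eq, f10_eq]; ring
end

section
/- For all real θ₁, θ₂, 64·(f₆(θ₁) − f₆(θ₂))·(f₁₀(θ₁) − f₁₀(θ₂)) = 45·(f₈(θ₁) − f₈(θ₂))², where f_n(θ) = cos^n θ + cos^n(θ−2π/3) + cos^n(θ+2π/3). -/
lemma key (θ : ℝ) :
    Real.cos (θ + 2 * Real.pi / 3) = -Real.cos θ - Real.cos (θ - 2 * Real.pi / 3) ∧
    Real.cos (θ - 2 * Real.pi / 3) * (-Real.cos θ - Real.cos (θ - 2 * Real.pi / 3)) =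
      Real.cos θ ^ 2 - 3 / 4 := by
  have hc : Real.cos (2 * Real.pi / 3) = -(1 / 2) := by
    rw [show (2 * Real.pi / 3 : ℝ) = Real.pi - Real.pi / 3 by ring, Real.cos_pi_sub,
      Real.cos_pi_div_three]
  have hs : Real.sin (2 * Real.pi / 3) = Real.sqrt 3 / 2 := by
    rw [show (2 * Real.pi / 3 : ℝ) = Real.pi - Real.pi / 3 by ring, Real.sin_pi_sub,
      Real.sin_pi_div_three]
  have h3 : Real.sqrt 3 ^ 2 = 3 := Real.sq_sqrt (by norm_num)
  have hsc : Real.sin θ ^ 2 = 1 - Real.cos θ ^ 2 := Real.sin_sq θ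
  constructor
  · rw [Real.cos_add, Real.cos_sub, hc]; ring
  · rw [Real.cos_sub, hc, hs]
    linear_combination (-(Real.sin θ ^ 2) / 4) * h3 + (-3 / 4) * hsc
lemma fval6 (θ : ℝ) : f 6 θ = (3) * Real.cos θ ^ 6 + (-9/2) * Real.cos θ ^ 4 + (27/16) * Real.cos θ ^ 2 + (27/32) := by
  have h := key θ
  unfold f
  rw [h.1]
  set A := Real.cos (θ - 2 * Real.pi / 3) with hA
  linear_combination ((-2) * A ^ 4 + (-4) * A ^ 3 * Real.cos θ + (-9) * A ^ 2 * Real.cos θ ^ 2 + (-3/2) * A ^ 2 + (-7) * A * Real.cos θ ^ 3 + (-3/2) * A * Real.cos θ + (1) * Real.cos θ ^ 4 + (-15/4) * Real.cos θ ^ 2 + (-9/8)) * h.2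

lemma fval8 (θ : ℝ) : f 8 θ = (6) * Real.cos θ ^ 6 + (-9) * Real.cos θ ^ 4 + (27/8) * Real.cos θ ^ 2 + (81/128) := by
  have h := key θ
  unfold f
  rw [h.1]
  set A := Real.cos (θ - 2 * Real.pi / 3) with hA
  linear_combination ((-2) * A ^ 6 + (-6) * A ^ 5 * Real.cos θ + (-20) * A ^ 4 * Real.cos θ ^ 2 + (-3/2) * A ^ 4 + (-30) * A ^ 3 * Real.cos θ ^ 3 + (-3) * A ^ 3 * Real.cos θ + (-20) * A ^ 2 * Real.cos θ ^ 4 + (-21/2) * A ^ 2 * Real.cos θ ^ 2 + (-9/8) * A ^ 2 + (-6) * A * Real.cos θ ^ 5 + (-9) * A * Real.cos θ ^ 3 + (-9/8) * A * Real.cos θ + (-2) * Real.cos θ ^ 6 + (9/2) * Real.cos θ ^ 4 + (-45/8) * Real.cos θ ^ 2 + (-27/32)) * h.2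

lemma fval10 (θ : ℝ) : f 10 θ = (135/16) * Real.cos θ ^ 6 + (-405/32) * Real.cos θ ^ 4 + (1215/256) * Real.cos θ ^ 2 + (243/512) := by
  have h := key θ
  unfold f
  rw [h.1]
  set A := Real.cos (θ - 2 * Real.pi / 3) with hA
  linear_combination ((-2) * A ^ 8 + (-8) * A ^ 7 * Real.cos θ + (-35) * A ^ 6 * Real.cos θ ^ 2 + (-3/2) * A ^ 6 + (-77) * A ^ 5 * Real.cos θ ^ 3 + (-9/2) * A ^ 5 * Real.cos θ + (-98) * A ^ 4 * Real.cos θ ^ 4 + (-81/4) * A ^ 4 * Real.cos θ ^ 2 + (-9/8) * A ^ 4 + (-77) * A ^ 3 * Real.cos θ ^ 5 + (-33) * A ^ 3 * Real.cos θ ^ 3 + (-9/4) * A ^ 3 * Real.cos θ + (-35) * A ^ 2 * Real.cos θ ^ 6 + (-81/4) * A ^ 2 * Real.cos θ ^ 4 + (-189/16) * A ^ 2 * Real.cos θ ^ 2 + (-27/32) * A ^ 2 + (-8) * A * Real.cos θ ^ 7 + (-9/2) * A * Real.cos θ ^ 5 + (-171/16) * A * Real.cos θ ^ 3 + (-27/32)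 * A * Real.cos θ + (-2) * Real.cos θ ^ 8 + (-3/2) * Real.cos θ ^ 6 + (117/16) * Real.cos θ ^ 4 + (-459/64) * Real.cos θ ^ 2 + (-81/128)) * h.2

theorem trig_ramanujan (θ₁ θ₂ : ℝ) :
    64 * ((f 6 θ₁ - f 6 θ₂) * (f 10 θ₁ - f 10 θ₂)) = 45 * (f 8 θ₁ - f 8 θ₂) ^ 2 := by
  rw [fval6 θ₁, fval6 θ₂, fval8 θ₁, fval8 θ₂, fval10 θ₁, fval10 θ₂]
  ring
end

section
/- For every real θ, cos⁷ θ + cos⁷(θ − 2π/3) + cos⁷(θ + 2π/3) = (63/64)·cos(3θ). -/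
theorem f7_lin (θ : ℝ) :
    Real.cos θ ^ 7 + Real.cos (θ - 2 * Real.pi / 3) ^ 7 +
      Real.cos (θ + 2 * Real.pi / 3) ^ 7 = 63 / 64 * Real.cos (3 * θ) := by
  have h23 : (2 * Real.pi / 3) = Real.pi - Real.pi / 3 := by ring
  have hc : Real.cos (2 * Real.pi / 3) = -(1/2) := by
    rw [h23, Real.cos_pi_sub, Real.cos_pi_div_three]
  have hs3 : Real.sin (2 * Real.pi / 3) = Real.sqrt 3 / 2 := by
    rw [h23, Real.sin_pi_sub, Real.sin_pi_div_three]
  rw [Real.cos_sub, Real.cos_add, Real.cos_three_mul, hc, hs3]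
  set c := Real.cos θ
  set s := Real.sin θ
  set t := Real.sqrt 3
  have hs : s ^ 2 = 1 - c ^ 2 := Real.sin_sq θ
  have ht : t ^ 2 = 3 := Real.sq_sqrt (by norm_num)
  linear_combination
    (-(189/64 : ℝ) * c * s^4 + (-126*c^3 - 189*c)/64 * s^2
      + (63*c^5 + 63*c^3 - 189*c)/64) * hs
    + (-(21/64 : ℝ)*c^5*s^2 - (35/64)*c^3*s^4*(t^2+3)
      - (7/64)*c*s^6*(t^4+3*t^2+9)) * ht
end

section
/- For all real a, b, d (with no side condition), 25·[(b+d)³ − (a+b)³ + (a−d)³]·[(b+d)⁷ − (a+b)⁷ + (a−d)⁷] = 21·[(b+d)⁵ − (a+b)⁵ + (a−d)⁵]². -/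
theorem deg357_simplified (a b d : ℝ) :
    25 * ((b+d)^3 - (a+b)^3 + (a-d)^3) * ((b+d)^7 - (a+b)^7 + (a-d)^7) =
      21 * ((b+d)^5 - (a+b)^5 + (a-d)^5)^2 := by
  ring
end

section
/- Let a, b, c, d be real numbers with ad = bc. Then 25·S₃·S₇ = 21·S₅², where S_k = (b+c+d)^k − (a+b+c)^k − (a+c+d)^k + (a+b+d)^k + (a−d)^k − (b−c)^k. -/
theorem deg357_two_vars (a b c d : ℝ) (h : a * d = b * c) :
    25 * ((b+c+d)^3 - (a+b+c)^3 - (a+c+d)^3 + (a+b+d)^3 + (a-d)^3 - (b-c)^3) *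
      ((b+c+d)^7 - (a+b+c)^7 - (a+c+d)^7 + (a+b+d)^7 + (a-d)^7 - (b-c)^7) =
    21 * ((b+c+d)^5 - (a+b+c)^5 - (a+c+d)^5 + (a+b+d)^5 + (a-d)^5 - (b-c)^5)^2 := by
  linear_combination ((-4725)*a^5*b^2*d + (-4725)*a^5*b*d^2 + (4725)*a^5*c^2*d + (4725)*a^5*c*d^2 + (4725)*a^4*b^3*c + (-9450)*a^4*b^3*d + (-4725)*a^4*b^2*c*d + (-14175)*a^4*b^2*d^2 + (-4725)*a^4*b*c^3 + (4725)*a^4*b*c^2*d + (-4725)*a^4*b*d^3 + (9450)*a^4*c^3*d + (14175)*a^4*c^2*d^2 + (4725)*a^4*c*d^3 + (9450)*a^3*b^4*c + (-4725)*a^3*b^4*d + (9450)*a^3*b^3*c^2 + (-9450)*a^3*b^3*d^2 + (-9450)*a^3*b^2*c^3 + (-9450)*a^3*b^2*c*d^2 + (-9450)*a^3*b*c^4 + (9450)*a^3*b*c^2*d^2 + (4725)*a^3*b*d^4 + (4725)*a^3*c^4*d + (9450)*a^3*c^3*d^2 + (-4725)*a^3*c*d^4 + (4725)*a^2*b^5*c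 + (14175)*a^2*b^4*c^2 + (4725)*a^2*b^4*c*d + (9450)*a^2*b^3*c^2*d + (9450)*a^2*b^3*d^3 + (-14175)*a^2*b^2*c^4 + (-9450)*a^2*b^2*c^3*d + (9450)*a^2*b^2*c*d^3 + (14175)*a^2*b^2*d^4 + (-4725)*a^2*b*c^5 + (-4725)*a^2*b*c^4*d + (-9450)*a^2*b*c^2*d^3 + (4725)*a^2*b*d^5 + (-9450)*a^2*c^3*d^3 + (-14175)*a^2*c^2*d^4 + (-4725)*a^2*c*d^5 + (4725)*a*b^5*c^2 + (4725)*a*b^4*c^3 + (-4725)*a*b^4*c*d^2 + (4725)*a*b^4*d^3 + (-4725)*a*b^3*c^4 + (-9450)*a*b^3*c^2*d^2 + (9450)*a*b^3*d^4 + (-4725)*a*b^2*c^5 + (9450)*a*b^2*c^3*d^2 + (4725)*a*b^2*c*d^4 + (4725)*a*b^2*d^5 + (4725)*a*b*c^4*d^2 + (-4725)*a*b*c^2*d^4 + (-4725)*a*c^4*d^3 + (-9450)*a*c^3*d^4 + (-4725)*a*c^2*d^5 + (-4725)*b^5*c^2*d + (-4725)*b^5*c*d^2 + (-4725)*b^4*c^3*d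 + (-14175)*b^4*c^2*d^2 + (-9450)*b^4*c*d^3 + (4725)*b^3*c^4*d + (-9450)*b^3*c^2*d^3 + (-4725)*b^3*c*d^4 + (4725)*b^2*c^5*d + (14175)*b^2*c^4*d^2 + (9450)*b^2*c^3*d^3 + (4725)*b*c^5*d^2 + (9450)*b*c^4*d^3 + (4725)*b*c^3*d^4) * h
end

section
/- Let a, b, c, d be real numbers with ad = bc. Then 8·(a²+ab+b²)·(a²+ac+c²)·S₆ = 3·a²·S₈, where S_k = (a+b+c)^k + (b+c+d)^k − (c+d+a)^k − (d+a+b)^k + (a−d)^k − (b−c)^k. -/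
theorem asym_68 (a b c d : ℝ) (h : a * d = b * c) :
    8 * (a^2 + a*b + b^2) * (a^2 + a*c + c^2) *
      ((a+b+c)^6 + (b+c+d)^6 - (c+d+a)^6 - (d+a+b)^6 + (a-d)^6 - (b-c)^6) =
    3 * a^2 * ((a+b+c)^8 + (b+c+d)^8 - (c+d+a)^8 - (d+a+b)^8 + (a-d)^8 - (b-c)^8) := by
  linear_combination ((-240)*b^2*c^2*d^4 + (-480)*b^2*c^3*d^3 + (-480)*b^2*c^4*d^2 + (-240)*b^2*c^5*d + (-144)*b^2*c^6 + (-480)*b^3*c^2*d^3 + (-720)*b^3*c^3*d^2 + (-480)*b^3*c^4*d + (-120)*b^3*c^5 + (-480)*b^4*c^2*d^2 + (-480)*b^4*c^3*d + (-480)*b^4*c^4 + (-240)*b^5*c^2*d + (-120)*b^5*c^3 + (-144)*b^6*c^2 + (-96)*a*b*c*d^5 + (-480)*a*b*c^2*d^4 + (-480)*a*b*c^3*d^3 + (-240)*a*b*c^4*d^2 + (-144)*a*b*c^5*d + (-144)*a*b*c^6 + (-480)*a*b^2*c*d^4 + (-1680)*a*b^2*c^2*d^3 + (-1680)*a*b^2*c^3*d^2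 + (-840)*a*b^2*c^4*d + (-504)*a*b^2*c^5 + (-480)*a*b^3*c*d^3 + (-1680)*a*b^3*c^2*d^2 + (-1440)*a*b^3*c^3*d + (-1080)*a*b^3*c^4 + (-240)*a*b^4*c*d^2 + (-840)*a*b^4*c^2*d + (-1080)*a*b^4*c^3 + (-144)*a*b^5*c*d + (-504)*a*b^5*c^2 + (-144)*a*b^6*c + (72)*a^2*d^6 + (168)*a^2*c*d^5 + (360)*a^2*c^2*d^4 + (600)*a^2*c^3*d^3 + (360)*a^2*c^4*d^2 + (24)*a^2*c^5*d + (-72)*a^2*c^6 + (168)*a^2*b*d^5 + (-60)*a^2*b*c*d^4 + (420)*a^2*b*c^3*d^2 + (-420)*a^2*b*c^5 + (360)*a^2*b^2*d^4 + (-1440)*a^2*b^2*c^2*d^2 + (-1440)*a^2*b^2*c^3*d + (-1440)*a^2*b^2*c^4 + (600)*a^2*b^3*d^3 + (420)*a^2*b^3*c*d^2 + (-1440)*a^2*b^3*c^2*d + (-2190)*a^2*b^3*c^3 + (360)*a^2*b^4*d^2 + (-1440)*a^2*b^4*c^2 + (24)*a^2*b^5*d + (-420)*a^2*b^5*c + (-72)*a^2*b^6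 + (84)*a^3*d^5 + (360)*a^3*c*d^4 + (900)*a^3*c^2*d^3 + (720)*a^3*c^3*d^2 + (60)*a^3*c^4*d + (-216)*a^3*c^5 + (360)*a^3*b*d^4 + (-960)*a^3*b*c^2*d^2 + (-960)*a^3*b*c^3*d + (-960)*a^3*b*c^4 + (900)*a^3*b^2*d^3 + (-960)*a^3*b^2*c*d^2 + (-3150)*a^3*b^2*c^2*d + (-2640)*a^3*b^2*c^3 + (720)*a^3*b^3*d^2 + (-960)*a^3*b^3*c*d + (-2640)*a^3*b^3*c^2 + (60)*a^3*b^4*d + (-960)*a^3*b^4*c + (-216)*a^3*b^5 + (360)*a^4*d^4 + (480)*a^4*c*d^3 + (240)*a^4*c^2*d^2 + (-360)*a^4*c^4 + (480)*a^4*b*d^3 + (-1350)*a^4*b*c*d^2 + (-1920)*a^4*b*c^2*d + (-1260)*a^4*b*c^3 + (240)*a^4*b^2*d^2 + (-1920)*a^4*b^2*c*d + (-2640)*a^4*b^2*c^2 + (-1260)*a^4*b^3*c + (-360)*a^4*b^4 + (90)*a^5*d^3 + (-120)*a^5*c*d^2 + (-60)*a^5*c^2*d + (-360)*a^5*c^3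 + (-120)*a^5*b*d^2 + (-1056)*a^5*b*c*d + (-1200)*a^5*b*c^2 + (-60)*a^5*b^2*d + (-1200)*a^5*b^2*c + (-360)*a^5*b^3 + (24)*a^6*d^2 + (-96)*a^6*c*d + (-360)*a^6*c^2 + (-96)*a^6*b*d + (-660)*a^6*b*c + (-360)*a^6*b^2 + (-36)*a^7*d + (-216)*a^7*c + (-216)*a^7*b + (-72)*a^8) * h
end

section
/- Let a, b, c, d be real numbers with ad = bc. Then 4·[(a+b+c)² + (b+c+d)² + (a−d)²]·S₆ = 3·S₈, where S_k = (a+b+c)^k + (b+c+d)^k − (c+d+a)^k − (d+a+b)^k + (a−d)^k − (b−c)^k. -/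
theorem sym_68 (a b c d : ℝ) (h : a * d = b * c) :
    4 * ((a+b+c)^2 + (b+c+d)^2 + (a-d)^2) *
      ((a+b+c)^6 + (b+c+d)^6 - (c+d+a)^6 - (d+a+b)^6 + (a-d)^6 - (b-c)^6) =
    3 * ((a+b+c)^8 + (b+c+d)^8 - (c+d+a)^8 - (d+a+b)^8 + (a-d)^8 - (b-c)^8) := by
  linear_combination ((-72)  *  d^6 + (-216)  *  c * d^5 + (-360)  *  c^2 * d^4 + (-360)  *  c^3 * d^3 + (-360)  *  c^4 * d^2 + (-216)  *  c^5 * d + (-72)  *  c^6 + (-216)  *  b * d^5 + (-900)  *  b * c * d^4 + (-1440)  *  b * c^2 * d^3 + (-1260)  *  b * c^3 * d^2 + (-720)  *  b * c^4 * d + (-324)  *  b * c^5 + (-360)  *  b^2 * d^4 + (-1440)  *  b^2 * c * d^3 + (-2160)  *  b^2 * c^2 * d^2 + (-1440)  *  b^2 * c^3 * d + (-360)  *  b^2 * c^4 + (-360)  *  b^3 * d^3 + (-1260)  *  b^3 * c * d^2 + (-1440)  *  b^3 * c^2 * d + (-990)  *  b^3 * c^3 + (-360)  *  b^4 * d^2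 + (-720)  *  b^4 * c * d + (-360)  *  b^4 * c^2 + (-216)  *  b^5 * d + (-324)  *  b^5 * c + (-72)  *  b^6 + (108)  *  a * d^5 + (180)  *  a * c^2 * d^3 + (-180)  *  a * c^4 * d + (-216)  *  a * c^5 + (-1440)  *  a * b * c * d^3 + (-2160)  *  a * b * c^2 * d^2 + (-1440)  *  a * b * c^3 * d + (-720)  *  a * b * c^4 + (180)  *  a * b^2 * d^3 + (-2160)  *  a * b^2 * c * d^2 + (-2430)  *  a * b^2 * c^2 * d + (-1440)  *  a * b^2 * c^3 + (-1440)  *  a * b^3 * c * d + (-1440)  *  a * b^3 * c^2 + (-180)  *  a * b^4 * d + (-720)  *  a * b^4 * c + (-216)  *  a * b^5 + (-360)  *  a^2 * c^4 + (-2430)  *  a^2 * b * c * d^2 + (-2160)  *  a^2 * b * c^2 * d + (-1260)  *  a^2 * b * c^3 + (-2160)  *  a^2 * b^2 * c * d + (-2160)  *  a^2 * b^2 * c^2 + (-1260)  *  a^2 * b^3 * c + (-360)  *  a^2 * b^4 + (450)  *  a^3 * d^3 + (180)  *  a^3 * c^2 * d + (-360)  *  a^3 * c^3 + (-1440)  *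  a^3 * b * c * d + (-1440)  *  a^3 * b * c^2 + (180)  *  a^3 * b^2 * d + (-1440)  *  a^3 * b^2 * c + (-360)  *  a^3 * b^3 + (-360)  *  a^4 * c^2 + (-900)  *  a^4 * b * c + (-360)  *  a^4 * b^2 + (108)  *  a^5 * d + (-216)  *  a^5 * c + (-216)  *  a^5 * b + (-72)  *  a^6) * h
end

section
/- Let p ≥ 1 and N ≥ 1 be integers and θ a real number. Then (1/N)·∑_{k=0}^{N−1} cos^{2p}(θ + 2kπ/N) = ∑_{m=0, N | 2m}^{p} a_{2m,p}·cos(2mθ), where a_{0,p} = C(2p,p)/2^{2p} and a_{2m,p} = C(2p,p+m)/2^{2p−1} for 1 ≤ m ≤ p. -/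
/-!
Expanding `(2 cos x)^{2p} = (e^{ix} + e^{-ix})^{2p}` binomially and pairing the terms `j` and
`2p - j` gives the power-reduction formula `cos^{2p} x = ∑_m a_{2m,p} cos 2mx`. Substituting
`x = θ + 2kπ/N` and averaging over `k`, the frequency `2m` contributes the real part of
`e^{2miθ} ∑_k ζ^{2mk}` with `ζ = e^{2πi/N}`, which is `N cos 2mθ` if `N ∣ 2m`, else `0`.
-/

open Finset

theorem Finset.sum_range_two_mul_add_one_of_symm {M : Type*} [AddCommMonoid M] (p : ℕ)
    (f : ℕ → M) (hf : ∀ j ≤ 2 * p, f (2 * p - j) = f j) :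
    ∑ j ∈ range (2 * p + 1), f j = f p + 2 • ∑ m ∈ range p, f (p + (m + 1)) := by
  have hlow : ∑ j ∈ range p, f j = ∑ m ∈ range p, f (p + (m + 1)) := by
    rw [← sum_range_reflect]
    refine sum_congr rfl fun m hm ↦ ?_
    rw [← hf (p + (m + 1)) (by grind)]
    congr 1
    grind
  rw [show 2 * p + 1 = p + (p + 1) by ring, sum_range_add, sum_range_succ', hlow]
  simp only [add_zero]
  abel

theorem IsPrimitiveRoot.geom_sum_pow_eq_ite {R : Type*} [CommRing R] [IsDomain R] {ζ : R} {N : ℕ}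
    (hζ : IsPrimitiveRoot ζ N) (j : ℕ) :
    ∑ k ∈ range N, (ζ ^ j) ^ k = if N ∣ j then (N : R) else 0 := by
  split_ifs with hj
  · simp [(hζ.pow_eq_one_iff_dvd j).mpr hj]
  · have hne : ζ ^ j ≠ 1 := fun h ↦ hj ((hζ.pow_eq_one_iff_dvd j).mp h)
    refine eq_zero_of_ne_zero_of_mul_left_eq_zero (sub_ne_zero_of_ne hne.symm) ?_
    rw [mul_neg_geom_sum, ← pow_mul, mul_comm, pow_mul, hζ.pow_eq_one, one_pow, sub_self]

namespace Real

theorem two_mul_cos_pow_eq_sum (n : ℕ) (x : ℝ) :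
    (2 * cos x) ^ n = ∑ j ∈ range (n + 1), n.choose j * cos ((2 * j - n) * x) := by
  have hterm : ∀ j ∈ range (n + 1), Complex.exp (x * Complex.I) ^ j *
      Complex.exp (-x * Complex.I) ^ (n - j) * n.choose j =
      Complex.exp (((2 * j - n) * x : ℝ) * Complex.I) * (n.choose j : ℝ) := by
    intro j hj
    rw [← Complex.exp_nat_mul, ← Complex.exp_nat_mul, ← Complex.exp_add,
      Nat.cast_sub (by grind)]
    push_cast
    ring_nf
  calc (2 * cos x) ^ n = ((2 * Complex.cos x) ^ n).re := by norm_cast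
    _ = _ := by
      rw [Complex.two_cos, add_pow, sum_congr rfl hterm, Complex.re_sum]
      refine sum_congr rfl fun j _ ↦ ?_
      rw [Complex.re_mul_ofReal, Complex.exp_ofReal_mul_I_re, mul_comm]

theorem cos_pow_two_mul_eq_sum (p : ℕ) (x : ℝ) :
    cos x ^ (2 * p) = ∑ m ∈ range (p + 1),
      (if m = 0 then (Nat.choose (2 * p) p : ℝ) / 2 ^ (2 * p)
       else (Nat.choose (2 * p) (p + m) : ℝ) / 2 ^ (2 * p - 1)) *
        cos (2 * (m : ℝ) * x) := by
  have hsymm : ∀ j ≤ 2 * p, ((2 * p).choose (2 * p - j) : ℝ) *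
      cos ((2 * ↑(2 * p - j) - ↑(2 * p)) * x) =
      (2 * p).choose j * cos ((2 * j - ↑(2 * p)) * x) := by
    intro j hj
    rw [Nat.choose_symm hj, Nat.cast_sub hj, ← cos_neg]
    congr 2
    ring
  have hexp := two_mul_cos_pow_eq_sum (2 * p) x
  rw [sum_range_two_mul_add_one_of_symm p _ hsymm] at hexp
  have hdiv : cos x ^ (2 * p) = (2 * cos x) ^ (2 * p) / 2 ^ (2 * p) := by
    rw [mul_pow]; field_simp
  rw [hdiv, hexp, sum_range_succ', if_pos rfl, add_comm, add_div, nsmul_eq_mul, mul_sum, sum_div]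
  congr 1
  · refine sum_congr rfl fun m hm ↦ ?_
    rw [if_neg (Nat.succ_ne_zero _), show 2 ^ (2 * p) = (2 : ℝ) ^ (2 * p - 1) * 2 by
      rw [← pow_succ]; congr 1; grind]
    push_cast
    field_simp
    ring_nf
  · simp

theorem sum_cos_add_two_pi_mul_div (N j : ℕ) (α : ℝ) :
    ∑ k ∈ range N, cos (α + 2 * π * k * j / N) =
      if N ∣ j then N * cos α else 0 := by
  rcases Nat.eq_zero_or_pos N with rfl | hN
  · simp
  set ζ := Complex.exp (2 * π * Complex.I / N)
  have hterm (k : ℕ) : cos (α + 2 * π * k * j / N) =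
      (Complex.exp (α * Complex.I) * (ζ ^ j) ^ k).re := by
    rw [← pow_mul, ← Complex.exp_nat_mul, ← Complex.exp_add, ← Complex.exp_ofReal_mul_I_re]
    push_cast
    ring_nf
  simp_rw [hterm, ← Complex.re_sum]
  rw [← mul_sum, (Complex.isPrimitiveRoot_exp N hN.ne').geom_sum_pow_eq_ite]
  split_ifs
  · rw [← Complex.ofReal_natCast, Complex.re_mul_ofReal, Complex.exp_ofReal_mul_I_re, mul_comm]
  · simp

end Real

open Finset in
theorem even_power_linearization_general (p N : ℕ) (hN : 1 ≤ N) (θ : ℝ) :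
    (1 / (N : ℝ)) * ∑ k ∈ range N, Real.cos (θ + 2 * k * Real.pi / N) ^ (2 * p) =
      ∑ m ∈ (range (p + 1)).filter (fun m => N ∣ 2 * m),
        (if m = 0 then (Nat.choose (2 * p) p : ℝ) / 2 ^ (2 * p)
         else (Nat.choose (2 * p) (p + m) : ℝ) / 2 ^ (2 * p - 1)) *
          Real.cos (2 * (m : ℝ) * θ) := by
  have hN0 : (N : ℝ) ≠ 0 := by positivity
  simp_rw [Real.cos_pow_two_mul_eq_sum p]
  rw [sum_comm, mul_sum, sum_filter]
  refine sum_congr rfl fun m _ ↦ ?_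
  have hangle (k : ℕ) : Real.cos (2 * m * (θ + 2 * k * Real.pi / N)) =
      Real.cos (2 * m * θ + 2 * Real.pi * k * ↑(2 * m) / N) := by
    push_cast
    ring_nf
  simp_rw [hangle, ← mul_sum, Real.sum_cos_add_two_pi_mul_div]
  split_ifs <;> simp [field]

open Finset in
theorem even_power_linearization (p N : ℕ) (hp : 1 ≤ p) (hN : 1 ≤ N) (θ : ℝ) :
    (1 / (N : ℝ)) * ∑ k ∈ range N, Real.cos (θ + 2 * k * Real.pi / N) ^ (2 * p) =
      ∑ m ∈ (range (p + 1)).filter (fun m => N ∣ 2 * m),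
        (if m = 0 then (Nat.choose (2 * p) p : ℝ) / 2 ^ (2 * p)
         else (Nat.choose (2 * p) (p + m) : ℝ) / 2 ^ (2 * p - 1)) *
          Real.cos (2 * (m : ℝ) * θ) :=
  even_power_linearization_general p N hN θ
end
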